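/- arXiv:2307.07605 — 2 statements merged into one kernel-verified Lean document; each statement's English description precedes it below -/
import Mathlib

section
/- For x₁, x₂ ∈ ℝ and c > 0, the unique minimizer of (z₁,z₂) ↦ ½(z₁-x₁)² + ½(z₂-x₂)² + c|z₁-z₂| is given by: if |x₁-x₂| ≤ 2c then z₁ = z₂ = (x₁+x₂)/2; otherwise z₁ = x₁ - c·sign(x₁-x₂) and z₂ = x₂ + c·sign(x₁-x₂). -/
theorem prox_abs_diff_two_dim (x₁ x₂ c : ℝ) (hc : 0 < c) :
    ∀ z : ℝ × ℝ,
      z ≠ (if |x₁ - x₂| ≤ 2 * c then (((x₁ + x₂) / 2, (x₁ + x₂) / 2) : ℝ × ℝ)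
        else (x₁ - c * Real.sign (x₁ - x₂), x₂ + c * Real.sign (x₁ - x₂))) →
      (fun w : ℝ × ℝ => (w.1 - x₁) ^ 2 / 2 + (w.2 - x₂) ^ 2 / 2 + c * |w.1 - w.2|)
          (if |x₁ - x₂| ≤ 2 * c then (((x₁ + x₂) / 2, (x₁ + x₂) / 2) : ℝ × ℝ)
            else (x₁ - c * Real.sign (x₁ - x₂), x₂ + c * Real.sign (x₁ - x₂)))
        < (fun w : ℝ × ℝ => (w.1 - x₁) ^ 2 / 2 + (w.2 - x₂) ^ 2 / 2 + c * |w.1 - w.2|) z := by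
  rintro ⟨z₁, z₂⟩
  split_ifs with h
  · intro hz
    simp only [ne_eq, Prod.mk.injEq, not_and_or] at hz
    beta_reduce
    obtain ⟨hxl, hxr⟩ := abs_le.mp h
    rw [sub_self, abs_zero]
    have hp : 0 < (z₁ - (x₁ + x₂) / 2) ^ 2 ∨ 0 < (z₂ - (x₁ + x₂) / 2) ^ 2 := by
      rcases hz with h' | h'
      · exact Or.inl (by have hne : z₁ - (x₁ + x₂) / 2 ≠ 0 := sub_ne_zero.mpr h'; positivity)
      · exact Or.inr (by have hne : z₂ - (x₁ + x₂) / 2 ≠ 0 := sub_ne_zero.mpr h'; positivity)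
    rcases abs_cases (z₁ - z₂) with ⟨he, _⟩ | ⟨he, _⟩ <;> rw [he] <;>
      rcases hp with hp | hp <;>
        nlinarith [sq_nonneg (z₁ - (x₁ + x₂) / 2), sq_nonneg (z₂ - (x₁ + x₂) / 2),
          sq_nonneg (z₁ - z₂)]
  · intro hz
    push_neg at h
    simp only [ne_eq, Prod.mk.injEq, not_and_or] at hz
    beta_reduce
    have hx0 : x₁ - x₂ ≠ 0 := by
      intro h0
      rw [h0, abs_zero] at h
      linarith
    rcases lt_or_gt_of_ne hx0 with hneg | hpos
    · rw [Real.sign_of_neg hneg] at hz ⊢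
      have habs : |x₁ - x₂| = -(x₁ - x₂) := abs_of_neg hneg
      rw [habs] at h
      have h2 : z₂ - z₁ ≤ |z₁ - z₂| := by rw [abs_sub_comm]; exact le_abs_self _
      have habs2 : |x₁ - c * (-1) - (x₂ + c * (-1))| = -(x₁ - c * (-1) - (x₂ + c * (-1))) := by
        apply abs_of_neg; linarith
      rw [habs2]
      have hp : 0 < (z₁ - x₁ - c) ^ 2 ∨ 0 < (z₂ - x₂ + c) ^ 2 := by
        rcases hz with h' | h'
        · refine Or.inl ?_
          have hne : z₁ - x₁ - c ≠ 0 := fun h0 => h' (by linarith)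
          positivity
        · refine Or.inr ?_
          have hne : z₂ - x₂ + c ≠ 0 := fun h0 => h' (by linarith)
          positivity
      rcases hp with hp | hp <;>
        nlinarith [sq_nonneg (z₁ - x₁ - c), sq_nonneg (z₂ - x₂ + c)]
    · rw [Real.sign_of_pos hpos] at hz ⊢
      have habs : |x₁ - x₂| = x₁ - x₂ := abs_of_pos hpos
      rw [habs] at h
      have h2 : z₁ - z₂ ≤ |z₁ - z₂| := le_abs_self _
      have habs2 : |x₁ - c * 1 - (x₂ + c * 1)| = x₁ - c * 1 - (x₂ + c * 1) := by
        apply abs_of_pos; linarith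
      rw [habs2]
      have hp : 0 < (z₁ - x₁ + c) ^ 2 ∨ 0 < (z₂ - x₂ - c) ^ 2 := by
        rcases hz with h' | h'
        · refine Or.inl ?_
          have hne : z₁ - x₁ + c ≠ 0 := fun h0 => h' (by linarith)
          positivity
        · refine Or.inr ?_
          have hne : z₂ - x₂ - c ≠ 0 := fun h0 => h' (by linarith)
          positivity
      rcases hp with hp | hp <;>
        nlinarith [sq_nonneg (z₁ - x₁ + c), sq_nonneg (z₂ - x₂ - c)]
end

section
/- Let f₁, …, f_m : ℝ^d → ℝ be differentiable with each ∇fᵢ being L-Lipschitz continuous. Let x₁,…,x_m ∈ ℝ^d, x̄ = (1/m)∑ᵢxᵢ. Then ½‖(1/m)∑ᵢ∇fᵢ(x̄)‖² - ‖(1/m)∑ᵢ∇fᵢ(xᵢ)‖² ≤ m·L² · ∑_{i=1}^{m-1}‖xᵢ - x_{i+1}‖². -/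
section Aux

variable {E : Type*} [NormedAddCommGroup E]

lemma half_sq_sub_sq_le (a b : E) : (1/2)*‖a‖^2 - ‖b‖^2 ≤ ‖a-b‖^2 := by
  have h : ‖a‖ ≤ ‖a - b‖ + ‖b‖ := by
    have := norm_add_le (a - b) b
    simpa using this
  have h2 := mul_self_le_mul_self (norm_nonneg a) h
  nlinarith [sq_nonneg (‖a - b‖ - ‖b‖)]

lemma sq_norm_sum_le {ι : Type*} (s : Finset ι) (v : ι → E) :
    ‖∑ i ∈ s, v i‖^2 ≤ s.card * ∑ i ∈ s, ‖v i‖^2 := by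
  calc ‖∑ i ∈ s, v i‖^2 ≤ (∑ i ∈ s, ‖v i‖)^2 := by
        have := norm_sum_le s v
        nlinarith [norm_nonneg (∑ i ∈ s, v i),
          Finset.sum_nonneg (fun i (_ : i ∈ s) => norm_nonneg (v i))]
    _ ≤ s.card * ∑ i ∈ s, ‖v i‖^2 := sq_sum_le_card_mul_sum_sq

lemma telescope_norm {n : ℕ} (x : Fin (n+1) → E) (i j : Fin (n+1)) :
    ‖x j - x i‖ ≤ ∑ k : Fin n, ‖x k.castSucc - x k.succ‖ := by
  set y : ℕ → E := fun k => x ⟨min k n, Nat.lt_succ_of_le (min_le_right _ _)⟩ with hy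
  have hxy : ∀ i : Fin (n+1), x i = y i.val := by
    intro i
    simp only [hy]
    congr 1
    exact Fin.ext (Nat.min_eq_left (Nat.lt_succ_iff.mp i.isLt)).symm
  have hfin : ∑ k : Fin n, ‖x k.castSucc - x k.succ‖
      = ∑ k ∈ Finset.range n, dist (y k) (y (k+1)) := by
    rw [← Fin.sum_univ_eq_sum_range (fun k => dist (y k) (y (k+1)))]
    apply Finset.sum_congr rfl
    intro k _
    rw [dist_eq_norm]
    have h1 : y k.val = x k.castSucc := by
      simp only [hy]
      congr 1
      exact Fin.ext (by simp [Fin.coe_castSucc, Nat.min_eq_left (le_of_lt k.isLt)])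
    have h2 : y (k.val + 1) = x k.succ := by
      simp only [hy]
      congr 1
      exact Fin.ext (by simp [Fin.val_succ, Nat.min_eq_left k.isLt])
    rw [h1, h2]
  have key : ∀ a b : ℕ, a ≤ b → b ≤ n →
      dist (y a) (y b) ≤ ∑ k : Fin n, ‖x k.castSucc - x k.succ‖ := by
    intro a b hab hbn
    rw [hfin]
    calc dist (y a) (y b) ≤ ∑ k ∈ Finset.Ico a b, dist (y k) (y (k+1)) :=
          dist_le_Ico_sum_dist y hab
      _ ≤ ∑ k ∈ Finset.range n, dist (y k) (y (k+1)) := by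
          apply Finset.sum_le_sum_of_subset_of_nonneg
          · intro k hk
            simp only [Finset.mem_Ico] at hk
            simp only [Finset.mem_range]
            omega
          · intro _ _ _; exact dist_nonneg
  rcases le_total i.val j.val with h | h
  · rw [← dist_eq_norm, hxy i, hxy j, dist_comm]
    exact key i.val j.val h (Nat.lt_succ_iff.mp j.isLt)
  · rw [← dist_eq_norm, hxy i, hxy j]
    exact key j.val i.val h (Nat.lt_succ_iff.mp i.isLt)

end Aux

theorem gradient_mean_bound (n d : ℕ) (L : ℝ)
    (f : Fin (n + 1) → EuclideanSpace ℝ (Fin d) → ℝ)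
    (hdiff : ∀ i, Differentiable ℝ (f i))
    (hlip : ∀ i x y, ‖gradient (f i) x - gradient (f i) y‖ ≤ L * ‖x - y‖)
    (x : Fin (n + 1) → EuclideanSpace ℝ (Fin d)) :
    (1 / 2) * ‖((n + 1 : ℕ) : ℝ)⁻¹ •
        ∑ i, gradient (f i) (((n + 1 : ℕ) : ℝ)⁻¹ • ∑ k, x k)‖ ^ 2
      - ‖((n + 1 : ℕ) : ℝ)⁻¹ • ∑ i, gradient (f i) (x i)‖ ^ 2
      ≤ ((n + 1 : ℕ) : ℝ) * L ^ 2 * ∑ k : Fin n, ‖x k.castSucc - x k.succ‖ ^ 2 := by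
  set m : ℝ := ((n + 1 : ℕ) : ℝ) with hm
  have hmpos : (0:ℝ) < m := by positivity
  set xb : EuclideanSpace ℝ (Fin d) := m⁻¹ • ∑ k, x k with hxb
  set S : ℝ := ∑ k : Fin n, ‖x k.castSucc - x k.succ‖ ^ 2 with hS
  have hSnn : 0 ≤ S := Finset.sum_nonneg fun _ _ => by positivity
  set g : Fin (n+1) → EuclideanSpace ℝ (Fin d) := fun i => gradient (f i) xb with hg
  set h : Fin (n+1) → EuclideanSpace ℝ (Fin d) := fun i => gradient (f i) (x i) with hh
  have hL2 : ∀ i j : Fin (n+1), ‖x j - x i‖^2 ≤ n * S := by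
    intro i j
    have h1 := telescope_norm x i j
    have h2 : (∑ k : Fin n, ‖x k.castSucc - x k.succ‖)^2 ≤ n * S := by
      have := sq_sum_le_card_mul_sum_sq (s := (Finset.univ : Finset (Fin n)))
        (f := fun k : Fin n => ‖x k.castSucc - x k.succ‖)
      simpa [hS] using this
    nlinarith [norm_nonneg (x j - x i),
      Finset.sum_nonneg (fun k (_ : k ∈ (Finset.univ : Finset (Fin n))) =>
        norm_nonneg (x k.castSucc - x k.succ))]
  have hxbd : ∀ i : Fin (n+1), ‖xb - x i‖^2 ≤ m⁻¹ * ∑ j, ‖x j - x i‖^2 := by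
    intro i
    have hrw : xb - x i = m⁻¹ • ∑ j, (x j - x i) := by
      rw [Finset.sum_sub_distrib, smul_sub, Finset.sum_const, Finset.card_univ,
        Fintype.card_fin]
      congr 1
      rw [← Nat.cast_smul_eq_nsmul ℝ, smul_smul, ← hm, inv_mul_cancel₀ hmpos.ne', one_smul]
    rw [hrw, norm_smul, Real.norm_eq_abs, abs_of_pos (by positivity), mul_pow]
    have hj := sq_norm_sum_le (Finset.univ) (fun j => x j - x i)
    have hcard : (((Finset.univ : Finset (Fin (n+1))).card : ℕ) : ℝ) = m := by
      simp [hm]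
    calc (m⁻¹)^2 * ‖∑ j, (x j - x i)‖^2
        ≤ (m⁻¹)^2 * (m * ∑ j, ‖x j - x i‖^2) := by
          apply mul_le_mul_of_nonneg_left _ (by positivity)
          rw [← hcard]
          exact_mod_cast hj
      _ = m⁻¹ * ∑ j, ‖x j - x i‖^2 := by
          field_simp
  have hsum_xb : ∑ i, ‖xb - x i‖^2 ≤ m * (n * S) := by
    calc ∑ i, ‖xb - x i‖^2 ≤ ∑ i : Fin (n+1), m⁻¹ * ∑ j, ‖x j - x i‖^2 :=
          Finset.sum_le_sum fun i _ => hxbd i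
      _ ≤ ∑ i : Fin (n+1), m⁻¹ * (m * (n * S)) := by
          apply Finset.sum_le_sum
          intro i _
          apply mul_le_mul_of_nonneg_left _ (by positivity)
          calc ∑ j, ‖x j - x i‖^2 ≤ ∑ _j : Fin (n+1), (n : ℝ) * S :=
                Finset.sum_le_sum fun j _ => hL2 i j
            _ = m * (n * S) := by
                rw [Finset.sum_const, Finset.card_univ, Fintype.card_fin, nsmul_eq_mul, hm]
      _ = m * (m⁻¹ * (m * (n * S))) := by
          rw [Finset.sum_const, Finset.card_univ, Fintype.card_fin, nsmul_eq_mul, hm]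
      _ = m * (n * S) := by field_simp
  have hgrad : ∑ i, ‖g i - h i‖^2 ≤ L^2 * ∑ i, ‖xb - x i‖^2 := by
    rw [Finset.mul_sum]
    apply Finset.sum_le_sum
    intro i _
    have hli := hlip i xb (x i)
    nlinarith [norm_nonneg (g i - h i), norm_nonneg (xb - x i)]
  have hAB : ‖(∑ i, g i) - ∑ i, h i‖^2 ≤ m * ∑ i, ‖g i - h i‖^2 := by
    rw [← Finset.sum_sub_distrib]
    have := sq_norm_sum_le (Finset.univ) (fun i => g i - h i)
    simpa [hm] using this
  have h1 : (1/2) * ‖m⁻¹ • ∑ i, g i‖^2 - ‖m⁻¹ • ∑ i, h i‖^2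
      ≤ (m⁻¹)^2 * ‖(∑ i, g i) - ∑ i, h i‖^2 := by
    calc (1/2) * ‖m⁻¹ • ∑ i, g i‖^2 - ‖m⁻¹ • ∑ i, h i‖^2
        ≤ ‖m⁻¹ • ∑ i, g i - m⁻¹ • ∑ i, h i‖^2 :=
          half_sq_sub_sq_le (m⁻¹ • ∑ i, g i) (m⁻¹ • ∑ i, h i)
      _ = (m⁻¹)^2 * ‖(∑ i, g i) - ∑ i, h i‖^2 := by
          rw [← smul_sub, norm_smul, Real.norm_eq_abs, abs_of_pos (by positivity), mul_pow]
  calc (1 / 2) * ‖m⁻¹ • ∑ i, gradient (f i) xb‖ ^ 2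
        - ‖m⁻¹ • ∑ i, gradient (f i) (x i)‖ ^ 2
      = (1/2) * ‖m⁻¹ • ∑ i, g i‖^2 - ‖m⁻¹ • ∑ i, h i‖^2 := rfl
    _ ≤ (m⁻¹)^2 * ‖(∑ i, g i) - ∑ i, h i‖^2 := h1
    _ ≤ (m⁻¹)^2 * (m * (L^2 * (m * (n * S)))) := by
        apply mul_le_mul_of_nonneg_left _ (by positivity)
        calc ‖(∑ i, g i) - ∑ i, h i‖^2 ≤ m * ∑ i, ‖g i - h i‖^2 := hAB
          _ ≤ m * (L^2 * ∑ i, ‖xb - x i‖^2) :=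
              mul_le_mul_of_nonneg_left hgrad (le_of_lt hmpos)
          _ ≤ m * (L^2 * (m * (n * S))) := by
              apply mul_le_mul_of_nonneg_left _ (le_of_lt hmpos)
              exact mul_le_mul_of_nonneg_left hsum_xb (by positivity)
    _ = (n:ℝ) * (L^2 * S) := by
        field_simp
    _ ≤ m * (L^2 * S) := by
        have hn : (n:ℝ) ≤ m := by rw [hm]; push_cast; linarith
        exact mul_le_mul_of_nonneg_right hn (mul_nonneg (sq_nonneg L) hSnn)
    _ = m * L^2 * S := by ring
end
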